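/- Contraction of the set of incorrect lower bounds. Let ε > 0 and suppose G is a (c,d)-regular (⌊2k/(1+2ε)+1⌋, 1/2+ε)-expander. Let x ∈ ℝ₊ⁿ have at most k nonzero entries and run the message-passing algorithm on y = Ax. For t ≥ 0 define W_{2t} = {i ∈ X : x̂_i^{2t} < x_i}. Then W_{2t+2} ⊆ W_{2t} for all t ≥ 0, |W_0| ≤ k, and whenever 0 < |W_{2t}| ≤ k we have |W_{2t+2}| ≤ (1−2ε)·|W_{2t}|. -/

import Mathlib

open Finset

namespace MP

/-- Neighborhood of a left vertex `i ∈ X`: the measurements involving `i`. -/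
def nhdX {n m : ℕ} (A : Fin m → Fin n → Bool) (i : Fin n) : Finset (Fin m) :=
  Finset.univ.filter (fun j => A j i = true)

/-- Neighborhood of a right vertex `j ∈ Y`. -/
def nhdY {n m : ℕ} (A : Fin m → Fin n → Bool) (j : Fin m) : Finset (Fin n) :=
  Finset.univ.filter (fun i => A j i = true)

/-- `Γ(S)`, the set of neighbors of `S ⊆ X`. -/
def Gam {n m : ℕ} (A : Fin m → Fin n → Bool) (S : Finset (Fin n)) : Finset (Fin m) :=
  S.biUnion (nhdX A)

/-- The measurement vector `y = A x`. -/
noncomputable def yvec {n m : ℕ} (A : Fin m → Fin n → Bool) (x : Fin n → ℝ) (j : Fin m) : ℝ :=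
  ∑ i ∈ nhdY A j, x i

/-- Message from measurement `j` to variable `i`, given current variable messages `z`:
`y_j - ∑_{k ∈ N_y(j) \ {i}} z_k`. -/
noncomputable def msgY {n m : ℕ} (A : Fin m → Fin n → Bool) (x z : Fin n → ℝ)
    (j : Fin m) (i : Fin n) : ℝ :=
  yvec A x j - ∑ k ∈ (nhdY A j).erase i, z k

/-- The algorithm's estimate `x̂^s` (equal to the variable-to-check message `m_{i→j}^s`,
which does not depend on `j`).  At odd times it is the min of incoming check messages;
at even times `s+1` it is `max(0, max of incoming check messages)`. -/
noncomputable def xhat {n m : ℕ} (A : Fin m → Fin n → Bool) (x : Fin n → ℝ) :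
    ℕ → Fin n → ℝ
  | 0 => fun _ => 0
  | s + 1 => fun i =>
      if Even (s + 1) then
        max 0 (sSup ((fun l => msgY A x (xhat A x s) l i) '' (↑(nhdX A i) : Set (Fin m))))
      else
        sInf ((fun l => msgY A x (xhat A x s) l i) '' (↑(nhdX A i) : Set (Fin m)))

/-- The variable-to-check message `m_{i→j}^s` (independent of `j`). -/
noncomputable def mXY {n m : ℕ} (A : Fin m → Fin n → Bool) (x : Fin n → ℝ)
    (s : ℕ) (i : Fin n) (_j : Fin m) : ℝ := xhat A x s i

/-- The check-to-variable message `m_{j→i}^s`. -/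
noncomputable def mYX {n m : ℕ} (A : Fin m → Fin n → Bool) (x : Fin n → ℝ)
    (s : ℕ) (j : Fin m) (i : Fin n) : ℝ := msgY A x (xhat A x s) j i

/-- `G` is `(c,d)`-regular. -/
def IsRegular {n m : ℕ} (A : Fin m → Fin n → Bool) (c d : ℕ) : Prop :=
  (∀ i, (nhdX A i).card = c) ∧ (∀ j, (nhdY A j).card = d)

/-- `G` is a `(kk, α)`-expander (w.r.t. left degree `c`). -/
def IsExpander {n m : ℕ} (A : Fin m → Fin n → Bool) (c kk : ℕ) (α : ℝ) : Prop :=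
  ∀ S : Finset (Fin n), S.card ≤ kk → α * c * S.card ≤ ((Gam A S).card : ℝ)

/-- ℓ¹ norm on `ℝⁿ`. -/
noncomputable def l1 {n : ℕ} (u : Fin n → ℝ) : ℝ := ∑ i, |u i|

/-- `z` has at most `k` nonzero entries. -/
def IsKSparse {n : ℕ} (k : ℕ) (z : Fin n → ℝ) : Prop :=
  (Finset.univ.filter (fun i => z i ≠ 0)).card ≤ k

/-- `xk` is a best `k`-sparse nonnegative approximation of `x` in ℓ¹. -/
def BestKSparse {n : ℕ} (k : ℕ) (x xk : Fin n → ℝ) : Prop :=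
  (∀ i, 0 ≤ xk i) ∧ IsKSparse k xk ∧
    ∀ z : Fin n → ℝ, (∀ i, 0 ≤ z i) → IsKSparse k z →
      l1 (fun i => x i - xk i) ≤ l1 (fun i => x i - z i)

end MP

open MP Finset

/-!
Write `W = W_{2t}`, `U = {i : x_i < x̂_i^{2t+1}}` and `W' = W_{2t+2}`. Since a check message is
`x_i + ∑_{l ≠ i} (x_l - x̂_l)`, a variable of `U` has, at each of its checks, another neighbour
in `W`, and a variable of `W'` has, at each of its checks, another neighbour in `U`.
Hence `Γ(W ∪ U) = Γ(W)` has at most `c k < (1/2 + ε) c K` elements, `K` the expansion threshold,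
so `|W ∪ U| ≤ K` (a `K`-subset would expand too little). A check with a unique neighbour in
`W ∪ U` has it in `W \ W'`, so counting edges gives
`2 |Γ(W ∪ U)| ≤ c |W ∪ U| + c (|W| - |W'|)`, while expansion gives
`(1 + 2ε) c |W ∪ U| ≤ 2 |Γ(W ∪ U)|`. Together, `|W'| ≤ |W| - 2ε |W ∪ U| ≤ (1 - 2ε) |W|`.
-/

namespace MP

section Graph

variable {n m : ℕ} (A : Fin m → Fin n → Bool)

@[simp]
lemma mem_nhdX {i : Fin n} {j : Fin m} : j ∈ nhdX A i ↔ A j i = true := by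
  simp [nhdX]

@[simp]
lemma mem_nhdY {i : Fin n} {j : Fin m} : i ∈ nhdY A j ↔ A j i = true := by
  simp [nhdY]

lemma mem_nhdX_iff_mem_nhdY {i : Fin n} {j : Fin m} : j ∈ nhdX A i ↔ i ∈ nhdY A j := by
  simp

lemma Gam_mono {S T : Finset (Fin n)} (h : S ⊆ T) : Gam A S ⊆ Gam A T :=
  biUnion_subset_biUnion_of_subset_left _ h

lemma sum_card_nhdY_inter (V : Finset (Fin n)) :
    ∑ j ∈ Gam A V, #(nhdY A j ∩ V) = ∑ i ∈ V, #(nhdX A i) := by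
  let r : Fin n → Fin m → Prop := fun i j => A j i = true
  calc ∑ j ∈ Gam A V, #(nhdY A j ∩ V)
      = ∑ j ∈ Gam A V, #(V.bipartiteBelow r j) :=
        sum_congr rfl fun j _ => by congr 1; ext i; simp [r, bipartiteBelow, and_comm]
    _ = ∑ i ∈ V, #((Gam A V).bipartiteAbove r i) :=
        (sum_card_bipartiteAbove_eq_sum_card_bipartiteBelow _).symm
    _ = ∑ i ∈ V, #(nhdX A i) := sum_congr rfl fun i hi => by
        congr 1
        ext j
        simp only [r, bipartiteAbove, mem_filter, ← mem_nhdX, and_iff_right_iff_imp]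
        exact fun hj => mem_biUnion.mpr ⟨i, hi, hj⟩

def uniqueNbrs (V : Finset (Fin n)) : Finset (Fin m) :=
  (Gam A V).filter fun j => #(nhdY A j ∩ V) = 1

def ChecksMeet (T : Finset (Fin n)) (i : Fin n) : Prop :=
  ∀ j ∈ nhdX A i, ∃ l ∈ (nhdY A j).erase i, l ∈ T

variable {A}

lemma card_Gam_le {c : ℕ} (hdeg : ∀ i, #(nhdX A i) ≤ c) (S : Finset (Fin n)) :
    #(Gam A S) ≤ c * #S := by
  rw [mul_comm]
  exact card_biUnion_le_card_mul S _ c fun i _ => hdeg i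

lemma two_mul_card_Gam_le {c : ℕ} (hdeg : ∀ i, #(nhdX A i) ≤ c) (V : Finset (Fin n)) :
    2 * #(Gam A V) ≤ c * #V + #(uniqueNbrs A V) := by
  have hpos : ∀ j ∈ Gam A V, 0 < #(nhdY A j ∩ V) := fun j hj => by
    obtain ⟨i, hi, hji⟩ := mem_biUnion.mp hj
    exact card_pos.mpr ⟨i, mem_inter.mpr ⟨(mem_nhdX_iff_mem_nhdY A).mp hji, hi⟩⟩
  calc 2 * #(Gam A V)
      = ∑ _j ∈ Gam A V, 2 := by rw [sum_const, smul_eq_mul, mul_comm]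
    _ ≤ ∑ j ∈ Gam A V, (#(nhdY A j ∩ V) + if #(nhdY A j ∩ V) = 1 then 1 else 0) :=
        sum_le_sum fun j hj => by have := hpos j hj; split_ifs <;> omega
    _ = ∑ i ∈ V, #(nhdX A i) + #(uniqueNbrs A V) := by
        rw [sum_add_distrib, sum_card_nhdY_inter, uniqueNbrs, card_filter]
    _ ≤ c * #V + #(uniqueNbrs A V) := by
        gcongr
        exact (sum_le_card_nsmul _ _ _ fun i _ => hdeg i).trans_eq (by rw [smul_eq_mul, mul_comm])

lemma IsExpander.card_le_of_card_Gam_lt {c K : ℕ} {α : ℝ} (hexp : IsExpander A c K α)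
    {V : Finset (Fin n)} (hV : (#(Gam A V) : ℝ) < α * c * K) : #V ≤ K := by
  by_contra! hK
  obtain ⟨V', hV'V, hV'⟩ := exists_subset_card_eq hK.le
  have hexpV' := hexp V' hV'.le
  have hGam : (#(Gam A V') : ℝ) ≤ #(Gam A V) := by exact_mod_cast card_le_card (Gam_mono A hV'V)
  rw [hV'] at hexpV'
  linarith

lemma Gam_union_eq_left {S U : Finset (Fin n)} (hU : ∀ i ∈ U, ChecksMeet A S i) :
    Gam A (S ∪ U) = Gam A S := by
  refine Subset.antisymm (fun j hj => ?_) (Gam_mono A subset_union_left)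
  obtain ⟨i, hi, hji⟩ := mem_biUnion.mp hj
  rcases mem_union.mp hi with hiS | hiU
  · exact mem_biUnion.mpr ⟨i, hiS, hji⟩
  · obtain ⟨l, hl, hlS⟩ := hU i hiU j hji
    exact mem_biUnion.mpr ⟨l, hlS, (mem_nhdX_iff_mem_nhdY A).mpr (mem_of_mem_erase hl)⟩

lemma uniqueNbrs_union_subset {S U W : Finset (Fin n)} (hU : ∀ i ∈ U, ChecksMeet A S i)
    (hW : ∀ i ∈ W, ChecksMeet A U i) : uniqueNbrs A (S ∪ U) ⊆ Gam A (S \ W) := by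
  intro j hj
  obtain ⟨i, hi⟩ := card_eq_one.mp (mem_filter.mp hj).2
  have hiji : i ∈ nhdY A j ∧ i ∈ S ∪ U := mem_inter.mp (hi ▸ mem_singleton_self i)
  have hji : j ∈ nhdX A i := (mem_nhdX_iff_mem_nhdY A).mpr hiji.1
  have not_meet : ∀ T ⊆ S ∪ U, ¬ ChecksMeet A T i := fun T hT hmeet => by
    obtain ⟨l, hl, hlT⟩ := hmeet j hji
    have : l ∈ nhdY A j ∩ (S ∪ U) := mem_inter.mpr ⟨mem_of_mem_erase hl, hT hlT⟩
    exact ne_of_mem_erase hl (mem_singleton.mp (hi ▸ this))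
  have hiS : i ∈ S := (mem_union.mp hiji.2).resolve_right
    fun hiU => not_meet S subset_union_left (hU i hiU)
  have hiW : i ∉ W := fun hiW => not_meet U subset_union_right (hW i hiW)
  exact mem_biUnion.mpr ⟨i, mem_sdiff.mpr ⟨hiS, hiW⟩, hji⟩

theorem card_le_of_checksMeet {c k K : ℕ} {ε : ℝ} (hdeg : ∀ i, #(nhdX A i) ≤ c) (hc : 0 < c)
    (hε : 0 ≤ ε) (hexp : IsExpander A c K (1 / 2 + ε)) (hkK : (k : ℝ) < (1 / 2 + ε) * K)
    {S U W : Finset (Fin n)} (hWS : W ⊆ S) (hSk : #S ≤ k)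
    (hU : ∀ i ∈ U, ChecksMeet A S i) (hW : ∀ i ∈ W, ChecksMeet A U i) :
    (#W : ℝ) ≤ (1 - 2 * ε) * #S := by
  have hcR : (0 : ℝ) < c := by exact_mod_cast hc
  have hGam : Gam A (S ∪ U) = Gam A S := Gam_union_eq_left hU
  have hGamS : (#(Gam A S) : ℝ) ≤ c * k := by
    exact_mod_cast (card_Gam_le hdeg S).trans (Nat.mul_le_mul_left c hSk)
  have hVK : #(S ∪ U) ≤ K := hexp.card_le_of_card_Gam_lt <| by
    rw [hGam]; nlinarith
  have hexpV : (1 / 2 + ε) * c * #(S ∪ U) ≤ (#(Gam A S) : ℝ) := hGam ▸ hexp _ hVK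
  have hcount : 2 * #(Gam A S) ≤ c * #(S ∪ U) + c * #(S \ W) := by
    rw [← hGam]
    exact (two_mul_card_Gam_le hdeg _).trans <| Nat.add_le_add_left
      ((card_le_card (uniqueNbrs_union_subset hU hW)).trans (card_Gam_le hdeg _)) _
  have hsdiff : (#(S \ W) : ℝ) = #S - #W := by
    rw [← card_sdiff_add_card_eq_card hWS]; push_cast; ring
  have hSV : (#S : ℝ) ≤ #(S ∪ U) := by exact_mod_cast card_le_card subset_union_left
  have hcountR : 2 * (#(Gam A S) : ℝ) ≤ c * #(S ∪ U) + c * (#S - #W) := by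
    rw [← hsdiff]; exact_mod_cast hcount
  have hslack : 2 * ε * #(S ∪ U) ≤ #S - #W :=
    le_of_mul_le_mul_left (by nlinarith) hcR
  nlinarith [mul_le_mul_of_nonneg_left hSV (by linarith : (0 : ℝ) ≤ 2 * ε)]

end Graph

lemma lt_half_add_mul_floor (k : ℕ) {ε : ℝ} (hε : 0 < 1 + 2 * ε) :
    (k : ℝ) < (1 / 2 + ε) * ⌊2 * (k : ℝ) / (1 + 2 * ε) + 1⌋₊ := by
  have hfloor := Nat.lt_floor_add_one (2 * (k : ℝ) / (1 + 2 * ε) + 1)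
  have : 2 * (k : ℝ) < (1 + 2 * ε) * ⌊2 * (k : ℝ) / (1 + 2 * ε) + 1⌋₊ := by
    rw [← div_lt_iff₀' hε]; linarith
  linarith

section Algorithm

variable {n m : ℕ} (A : Fin m → Fin n → Bool) (x : Fin n → ℝ)

lemma msgY_eq_add_sum (z : Fin n → ℝ) {i : Fin n} {j : Fin m} (h : i ∈ nhdY A j) :
    msgY A x z j i = x i + ∑ l ∈ (nhdY A j).erase i, (x l - z l) := by
  rw [msgY, yvec, ← add_sum_erase _ x h, sum_sub_distrib]
  ring

lemma msgY_anti {z z' : Fin n → ℝ} (h : z ≤ z') (j : Fin m) (i : Fin n) :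
    msgY A x z' j i ≤ msgY A x z j i :=
  sub_le_sub_left (sum_le_sum fun l _ => h l) _

lemma checksMeet_of_lt_msgY {z : Fin n → ℝ} {i : Fin n}
    (h : ∀ j ∈ nhdX A i, x i < msgY A x z j i) :
    ChecksMeet A (univ.filter fun l => z l < x l) i := by
  intro j hj
  by_contra! hnone
  have hle : ∑ l ∈ (nhdY A j).erase i, (x l - z l) ≤ 0 :=
    sum_nonpos fun l hl => by simpa using hnone l hl
  have := h j hj
  rw [msgY_eq_add_sum A x z ((mem_nhdX_iff_mem_nhdY A).mp hj)] at this
  linarith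

lemma checksMeet_of_msgY_lt {z : Fin n → ℝ} {i : Fin n}
    (h : ∀ j ∈ nhdX A i, msgY A x z j i < x i) :
    ChecksMeet A (univ.filter fun l => x l < z l) i := by
  intro j hj
  by_contra! hnone
  have hle : 0 ≤ ∑ l ∈ (nhdY A j).erase i, (x l - z l) :=
    sum_nonneg fun l hl => by simpa using hnone l hl
  have := h j hj
  rw [msgY_eq_add_sum A x z ((mem_nhdX_iff_mem_nhdY A).mp hj)] at this
  linarith

variable (hne : ∀ i, (nhdX A i).Nonempty)
include hne

lemma xhat_odd (t : ℕ) (i : Fin n) :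
    xhat A x (2 * t + 1) i = (nhdX A i).inf' (hne i) fun j => msgY A x (xhat A x (2 * t)) j i := by
  rw [inf'_eq_csInf_image, xhat]
  exact if_neg (by simp [parity_simps])

lemma xhat_even (t : ℕ) (i : Fin n) :
    xhat A x (2 * t + 2) i =
      max 0 ((nhdX A i).sup' (hne i) fun j => msgY A x (xhat A x (2 * t + 1)) j i) := by
  rw [sup'_eq_csSup_image, xhat]
  exact if_pos (by simp [parity_simps])

lemma xhat_odd_le_of_le {s t : ℕ} (h : xhat A x (2 * t) ≤ xhat A x (2 * s)) :
    xhat A x (2 * s + 1) ≤ xhat A x (2 * t + 1) := fun i => by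
  rw [xhat_odd A x hne, xhat_odd A x hne]
  exact le_inf' _ _ fun j hj => (inf'_le _ hj).trans (msgY_anti A x h j i)

lemma xhat_even_le_of_le {s t : ℕ} (h : xhat A x (2 * s + 1) ≤ xhat A x (2 * t + 1)) :
    xhat A x (2 * t + 2) ≤ xhat A x (2 * s + 2) := fun i => by
  rw [xhat_even A x hne, xhat_even A x hne]
  exact max_le_max le_rfl (sup'_le _ _ fun j hj =>
    (msgY_anti A x h j i).trans (le_sup' (fun j => msgY A x (xhat A x (2 * s + 1)) j i) hj))

lemma xhat_two_mul_le_two_mul_succ (t : ℕ) : xhat A x (2 * t) ≤ xhat A x (2 * (t + 1)) := by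
  induction t with
  | zero => exact fun i => (xhat_even A x hne 0 i).symm ▸ le_max_left _ _
  | succ t ih => exact xhat_even_le_of_le A x hne (xhat_odd_le_of_le A x hne ih)

lemma checksMeet_of_lt_xhat_odd {t : ℕ} {i : Fin n} (h : x i < xhat A x (2 * t + 1) i) :
    ChecksMeet A (univ.filter fun l => xhat A x (2 * t) l < x l) i :=
  checksMeet_of_lt_msgY A x fun _ hj => h.trans_le <| (xhat_odd A x hne t i).trans_le (inf'_le _ hj)

lemma checksMeet_of_xhat_even_lt {t : ℕ} {i : Fin n} (h : xhat A x (2 * t + 2) i < x i) :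
    ChecksMeet A (univ.filter fun l => x l < xhat A x (2 * t + 1) l) i :=
  checksMeet_of_msgY_lt A x fun _ hj => lt_of_le_of_lt
    ((le_sup' (fun j => msgY A x (xhat A x (2 * t + 1)) j i) hj).trans
      ((le_max_right _ _).trans_eq (xhat_even A x hne t i).symm)) h

end Algorithm

end MP

theorem incorrect_set_contraction_general (n m c d k : ℕ)
    (hc : 0 < c)
    (A : Fin m → Fin n → Bool) (ε : ℝ) (hε : 0 < ε)
    (hreg : IsRegular A c d)
    (hexp : IsExpander A c (Nat.floor (2 * (k : ℝ) / (1 + 2 * ε) + 1)) (1 / 2 + ε))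
    (x : Fin n → ℝ) (hsparse : IsKSparse k x) :
    (∀ t : ℕ,
      (Finset.univ.filter (fun i => xhat A x (2 * (t + 1)) i < x i)) ⊆
        (Finset.univ.filter (fun i => xhat A x (2 * t) i < x i))) ∧
    (Finset.univ.filter (fun i => xhat A x 0 i < x i)).card ≤ k ∧
    (∀ t : ℕ,
      0 < (Finset.univ.filter (fun i => xhat A x (2 * t) i < x i)).card →
      (Finset.univ.filter (fun i => xhat A x (2 * t) i < x i)).card ≤ k →
      ((Finset.univ.filter (fun i => xhat A x (2 * (t + 1)) i < x i)).card : ℝ) ≤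
        (1 - 2 * ε) *
          ((Finset.univ.filter (fun i => xhat A x (2 * t) i < x i)).card : ℝ)) := by
  have hne : ∀ i, (nhdX A i).Nonempty := fun i => card_pos.mp (hreg.1 i ▸ hc)
  have hsub : ∀ t : ℕ, univ.filter (fun i => xhat A x (2 * (t + 1)) i < x i) ⊆
      univ.filter (fun i => xhat A x (2 * t) i < x i) := fun t =>
    monotone_filter_right _ fun i _ h => (xhat_two_mul_le_two_mul_succ A x hne t i).trans_lt h
  refine ⟨hsub, (card_le_card (monotone_filter_right _ fun i _ h => h.ne')).trans hsparse,
    fun t _ hSk => ?_⟩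
  exact card_le_of_checksMeet (fun i => (hreg.1 i).le) hc hε.le hexp
    (lt_half_add_mul_floor k (by linarith)) (hsub t) hSk
    (fun i hi => checksMeet_of_lt_xhat_odd A x hne (mem_filter.mp hi).2)
    (fun i hi => checksMeet_of_xhat_even_lt A x hne (mem_filter.mp hi).2)

/-- **Contraction of the set of incorrect lower bounds.** With
`W_{2t} = {i : x̂_i^{2t} < x_i}`, one has `W_{2t+2} ⊆ W_{2t}`, `|W_0| ≤ k`, and whenever
`0 < |W_{2t}| ≤ k`, `|W_{2t+2}| ≤ (1-2ε)|W_{2t}|`. -/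
theorem incorrect_set_contraction (n m c d k : ℕ)
    (hn : 0 < n) (hm : 0 < m) (hc : 0 < c) (hd : 0 < d) (hk : 0 < k)
    (A : Fin m → Fin n → Bool) (ε : ℝ) (hε : 0 < ε)
    (hreg : IsRegular A c d)
    (hexp : IsExpander A c (Nat.floor (2 * (k : ℝ) / (1 + 2 * ε) + 1)) (1 / 2 + ε))
    (x : Fin n → ℝ) (hx : ∀ i, 0 ≤ x i) (hsparse : IsKSparse k x) :
    (∀ t : ℕ,
      (Finset.univ.filter (fun i => xhat A x (2 * (t + 1)) i < x i)) ⊆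
        (Finset.univ.filter (fun i => xhat A x (2 * t) i < x i))) ∧
    (Finset.univ.filter (fun i => xhat A x 0 i < x i)).card ≤ k ∧
    (∀ t : ℕ,
      0 < (Finset.univ.filter (fun i => xhat A x (2 * t) i < x i)).card →
      (Finset.univ.filter (fun i => xhat A x (2 * t) i < x i)).card ≤ k →
      ((Finset.univ.filter (fun i => xhat A x (2 * (t + 1)) i < x i)).card : ℝ) ≤
        (1 - 2 * ε) *
          ((Finset.univ.filter (fun i => xhat A x (2 * t) i < x i)).card : ℝ)) :=
  incorrect_set_contraction_general n m c d k hc A ε hε hreg hexp x hsparse
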